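/- For every n ≥ 1, the sequence repeating (e_1, e_2, e_3, e_4) n times is the unique nonempty 4-dimensional balanced ballot path of length 4n with semisymmetric height at most 5. -/

import Mathlib

open scoped Classical

/-- Number of steps among the first `i` steps of `P` equal to basis vector `j`. -/
def cnt (k n : ℕ) (P : Fin (k*n) → Fin k) (j : Fin k) (i : ℕ) : ℕ :=
  (Finset.univ.filter (fun t : Fin (k*n) => (t : ℕ) < i ∧ P t = j)).card

/-- `P` is a `k`-dimensional balanced ballot path of length `k*n`:
each basis vector appears exactly `n` times, and every partial sum is
weakly decreasing in coordinates. -/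
def IsBBP (k n : ℕ) (P : Fin (k*n) → Fin k) : Prop :=
  (∀ j : Fin k, cnt k n P j (k*n) = n) ∧
  (∀ i ≤ k*n, ∀ j j' : Fin k, j ≤ j' → cnt k n P j' i ≤ cnt k n P j i)

/-- Semisymmetric height `g_k` of the `i`-th intermediate point of `P`. -/
def ptHt (k n : ℕ) (P : Fin (k*n) → Fin k) (i : ℕ) : ℤ :=
  ∑ j : Fin k, ((k : ℤ) - 1 - 2*(j : ℕ)) * (cnt k n P j i)

/-- The semisymmetric height of path `P` is at most `u`. -/
def HeightLE (k n : ℕ) (P : Fin (k*n) → Fin k) (u : ℤ) : Prop :=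
  ∀ i ≤ k*n, ptHt k n P i ≤ u

/-- The semisymmetric height of path `P` is exactly `u`. -/
def HeightEq (k n : ℕ) (P : Fin (k*n) → Fin k) (u : ℤ) : Prop :=
  HeightLE k n P u ∧ ∃ i ≤ k*n, ptHt k n P i = u

/-!
The periodic path visits the points `(q,q,q,q)`, `(q+1,q,q,q)`, `(q+1,q+1,q,q)`, `(q+1,q+1,q+1,q)`,
where `g_4` takes the values `0, 3, 4, 3`. Conversely, induct on the length of a periodic prefix:
it ends at one of these four points, and from each of them every step other than the periodic one
either leaves the ballot region or reaches height `6` or `7`.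
-/

lemma Nat.add_sub_one_sub_div_succ {k m j : ℕ} (hj : j < k) :
    (m + 1 + k - 1 - j) / k = (m + k - 1 - j) / k + if j = m % k then 1 else 0 := by
  have hdvd : k ∣ m + k - j ↔ j = m % k := by
    rcases le_or_gt j m with h | h
    · rw [show m + k - j = m - j + k by omega, Nat.dvd_add_self_right, ← Nat.modEq_iff_dvd' h,
        Nat.ModEq, Nat.mod_eq_of_lt hj]
    · rw [Nat.mod_eq_of_lt (h.trans hj)]
      refine ⟨fun hd => ?_, fun hjm => by omega⟩
      have := Nat.le_of_dvd (by omega) hd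
      omega
  rw [show m + 1 + k - 1 - j = m + k - 1 - j + 1 by omega, Nat.succ_div,
    show m + k - 1 - j + 1 = m + k - j by omega]
  simp only [hdvd]

section Counts

open Finset

variable {k n : ℕ} (P : Fin (k*n) → Fin k)

lemma cnt_zero (j : Fin k) : cnt k n P j 0 = 0 := by
  simp [cnt]

lemma cnt_succ (j : Fin k) {i : ℕ} (hi : i < k*n) :
    cnt k n P j (i+1) = cnt k n P j i + if P ⟨i, hi⟩ = j then 1 else 0 := by
  have hlast : (if P ⟨i, hi⟩ = j then 1 else 0) =
      ∑ t : Fin (k*n), if t = ⟨i, hi⟩ ∧ P t = j then 1 else 0 := by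
    simp [ite_and]
  simp only [cnt, card_filter]
  rw [hlast, ← sum_add_distrib]
  refine sum_congr rfl fun t _ => ?_
  by_cases ht : (t : ℕ) = i
  · obtain rfl : t = ⟨i, hi⟩ := Fin.ext ht
    simp
  · have hne : t ≠ ⟨i, hi⟩ := fun h => ht (congrArg Fin.val h)
    have hlt : (t : ℕ) < i + 1 ↔ (t : ℕ) < i := by omega
    simp only [hlt, hne, false_and, if_false, add_zero]

lemma cnt_of_forall_val_eq_mod {i : ℕ} (hi : i ≤ k*n)
    (hper : ∀ t : Fin (k*n), (t : ℕ) < i → (P t : ℕ) = t % k) (j : Fin k) :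
    cnt k n P j i = (i + k - 1 - j) / k := by
  induction i with
  | zero => rw [cnt_zero]; exact (Nat.div_eq_of_lt (by omega)).symm
  | succ m ih =>
    have hm : m < k*n := by omega
    have hPm : (P ⟨m, hm⟩ : ℕ) = m % k := hper ⟨m, hm⟩ (by simp)
    rw [cnt_succ P j hm, ih (by omega) fun t ht => hper t (by omega),
      Nat.add_sub_one_sub_div_succ j.isLt]
    simp only [Fin.ext_iff, hPm, eq_comm]

end Counts

lemma ptHt_four {n : ℕ} (P : Fin (4*n) → Fin 4) (i : ℕ) :
    ptHt 4 n P i = 3 * cnt 4 n P 0 i + cnt 4 n P 1 i - cnt 4 n P 2 i - 3 * cnt 4 n P 3 i := by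
  rw [ptHt, Fin.sum_univ_four]
  push_cast [Fin.coe_ofNat_eq_mod]
  ring

lemma val_eq_mod_four_of_ballot_of_ptHt_le {n m : ℕ} (P : Fin (4*n) → Fin 4) (hm : m < 4*n)
    (hper : ∀ t : Fin (4*n), (t : ℕ) < m → (P t : ℕ) = t % 4)
    (hballot : ∀ j j' : Fin 4, j ≤ j' → cnt 4 n P j' (m+1) ≤ cnt 4 n P j (m+1))
    (hht : ptHt 4 n P (m+1) ≤ 5) : (P ⟨m, hm⟩ : ℕ) = m % 4 := by
  have hcnt (j : Fin 4) :
      cnt 4 n P j (m+1) = (m + 3 - j) / 4 + if (P ⟨m, hm⟩ : ℕ) = j then 1 else 0 := by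
    simp only [cnt_succ P j hm, cnt_of_forall_val_eq_mod P hm.le hper, Fin.ext_iff]
    rfl
  have h01 := hballot 0 1 (by decide)
  have h12 := hballot 1 2 (by decide)
  have h23 := hballot 2 3 (by decide)
  rw [ptHt_four] at hht
  simp only [hcnt, Fin.val_zero, Fin.val_one, Fin.val_two] at h01 h12 h23 hht
  have := (P ⟨m, hm⟩).isLt
  split_ifs at h01 h12 h23 hht <;> omega

lemma val_eq_mod_four_of_heightLE {n : ℕ} {P : Fin (4*n) → Fin 4}
    (hballot : ∀ i ≤ 4*n, ∀ j j' : Fin 4, j ≤ j' → cnt 4 n P j' i ≤ cnt 4 n P j i)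
    (hP : HeightLE 4 n P 5) (t : Fin (4*n)) : (P t : ℕ) = t % 4 := by
  obtain ⟨m, hm⟩ := t
  induction m using Nat.strong_induction_on with
  | _ m ih =>
    exact val_eq_mod_four_of_ballot_of_ptHt_le P hm (fun t ht => ih t ht t.isLt)
      (hballot (m+1) hm) (hP (m+1) hm)

lemma heightLE_five_of_forall_val_eq_mod_four {n : ℕ} {P : Fin (4*n) → Fin 4}
    (hP : ∀ t, (P t : ℕ) = t % 4) : HeightLE 4 n P 5 := by
  intro i hi
  have hcnt := cnt_of_forall_val_eq_mod P hi fun t _ => hP t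
  rw [ptHt_four, hcnt, hcnt, hcnt, hcnt]
  simp only [Fin.val_zero, Fin.val_one, Fin.val_two]
  omega

theorem stmt9 (n : ℕ) (P : Fin (4*n) → Fin 4) (hP : IsBBP 4 n P) :
    HeightLE 4 n P 5 ↔ P = fun t => ⟨(t : ℕ) % 4, by omega⟩ := by
  refine ⟨fun h => funext fun t => Fin.ext (val_eq_mod_four_of_heightLE hP.2 h t), ?_⟩
  rintro rfl
  exact heightLE_five_of_forall_val_eq_mod_four fun _ => rfl
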